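/- Let A = (Q,q0,δ,F) be a reachable DFA over a preordered alphabet Σ whose recognized language L(A) is upwards-closed for the subword ordering. Then for every state q ∈ Q and every word v ∈ L(A), δ*(v,q) ∈ F. In particular, if L(A) is nonempty, an accepting state is reachable from every state. -/

import Mathlib

/-! Prepending the word `u` that reaches `q` to an accepted word `v` gives a word `u ++ v` above `v`
in the subword ordering, hence accepted; and `u ++ v` is read from `q0` by passing through `q`. -/

/-- Extension of a transition function `δ : Σ × Q → Q` to words:
`δ*(ε,q) = q` and `δ*(wσ,q) = δ(σ, δ*(w,q))`. -/
def deltaStar {σ Q : Type*} (δ : σ → Q → Q) (w : List σ) (q : Q) : Q :=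
  w.foldl (fun p a => δ a p) q

theorem deltaStar_append {σ Q : Type*} (δ : σ → Q → Q) (u v : List σ) (q : Q) :
    deltaStar δ (u ++ v) q = deltaStar δ v (deltaStar δ u q) :=
  List.foldl_append

theorem deltaStar_mem_of_append_mem {σ Q : Type*} {q0 q : Q} {δ : σ → Q → Q} {F : Set Q}
    {u v : List σ} (hu : deltaStar δ u q0 = q) (huv : deltaStar δ (u ++ v) q0 ∈ F) :
    deltaStar δ v q ∈ F := by
  rwa [deltaStar_append, hu] at huv

theorem deltaStar_append_mem_of_upwardClosed {σ Q : Type*} [Preorder σ] {q0 : Q}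
    {δ : σ → Q → Q} {F : Set Q}
    (hup : ∀ w w' : List σ, deltaStar δ w q0 ∈ F →
      List.SublistForall₂ (· ≤ ·) w w' → deltaStar δ w' q0 ∈ F)
    (u : List σ) {v : List σ} (hv : deltaStar δ v q0 ∈ F) :
    deltaStar δ (u ++ v) q0 ∈ F :=
  hup v (u ++ v) hv (List.sublist_append_right u v).sublistForall₂

/-- In a reachable DFA recognizing an upwards-closed language, for every state
`q` and every accepted word `v`, `δ*(v,q) ∈ F`; in particular if the language
is nonempty an accepting state is reachable from every state. -/
theorem accepting_reachable_from_every_state {σ Q : Type*} [Preorder σ]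
    (q0 : Q) (δ : σ → Q → Q) (F : Set Q)
    (hreach : ∀ q : Q, ∃ u : List σ, deltaStar δ u q0 = q)
    (hup : ∀ w w' : List σ, deltaStar δ w q0 ∈ F →
      List.SublistForall₂ (· ≤ ·) w w' → deltaStar δ w' q0 ∈ F) :
    (∀ (q : Q) (v : List σ), deltaStar δ v q0 ∈ F → deltaStar δ v q ∈ F) ∧
    ((∃ v : List σ, deltaStar δ v q0 ∈ F) →
      ∀ q : Q, ∃ v : List σ, deltaStar δ v q ∈ F) := by
  have accepted_from_every_state (q : Q) (v : List σ) (hv : deltaStar δ v q0 ∈ F) :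
      deltaStar δ v q ∈ F := by
    obtain ⟨u, hu⟩ := hreach q
    exact deltaStar_mem_of_append_mem hu (deltaStar_append_mem_of_upwardClosed hup u hv)
  exact ⟨accepted_from_every_state, fun ⟨v, hv⟩ q => ⟨v, accepted_from_every_state q v hv⟩⟩
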